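/- arXiv:hep-th/0412092 — 4 statements merged into one kernel-verified Lean document; each statement's English description precedes it below -/
import Mathlib

section
/- On the right regular representation (ρ(x)ψ)(v) = ψ(vx) on functions on G, together with multiplication operators (u_ρ(y,z)ψ)(v) = φ(v,y,z)ψ(v), setting α_x = ad(ρ(x)), one has φ(x,y,z)·u_ρ(x,y)·u_ρ(xy,z)·u_ρ(x,yz)⁻¹ = α_x[u_ρ(y,z)], i.e., the modified cocycle identity holds with obstruction φ. -/
/-- For the right regular representation `(ρ(x)ψ)(v) = ψ(vx)` and multiplication
operators `(u_ρ(y,z)ψ)(v) = φ(v,y,z)ψ(v)`, setting `α_x = ad(ρ(x))` one has the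
modified cocycle identity
`φ(x,y,z)·u_ρ(x,y)·u_ρ(xy,z)·u_ρ(x,yz)⁻¹ = α_x[u_ρ(y,z)]`. -/
theorem stmt_6 (G : Type*) [Group G] (φ : G → G → G → ℂˣ)
    -- φ is an antisymmetric tricharacter with values in the circle
    (hnorm : ∀ x y z, ‖((φ x y z : ℂˣ) : ℂ)‖ = 1)
    (h1 : ∀ x x' y z, φ (x * x') y z = φ x y z * φ x' y z)
    (h2 : ∀ x y y' z, φ x (y * y') z = φ x y z * φ x y' z)
    (h3 : ∀ x y z z', φ x y (z * z') = φ x y z * φ x y z')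
    (ha1 : ∀ x y z, φ y x z = (φ x y z)⁻¹)
    (ha2 : ∀ x y z, φ x z y = (φ x y z)⁻¹)
    -- the right regular representation, the multiplication operators and their inverses
    (ρ : G → (G → ℂ) → (G → ℂ)) (hρ : ∀ x ψ v, ρ x ψ v = ψ (v * x))
    (uρ : G → G → (G → ℂ) → (G → ℂ))
    (huρ : ∀ y z ψ v, uρ y z ψ v = ((φ v y z : ℂˣ) : ℂ) * ψ v)
    (uρinv : G → G → (G → ℂ) → (G → ℂ))
    (huρinv : ∀ y z ψ v, uρinv y z ψ v = (((φ v y z)⁻¹ : ℂˣ) : ℂ) * ψ v) :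
    ∀ (x y z : G) (ψ : G → ℂ),
      ((φ x y z : ℂˣ) : ℂ) • (uρ x y (uρ (x * y) z (uρinv x (y * z) ψ))) =
        ρ x (uρ y z (ρ x⁻¹ ψ)) := by
  intro x y z ψ
  funext v
  simp only [Pi.smul_apply, smul_eq_mul, huρ, huρinv, hρ, mul_inv_cancel_right]
  have key : φ x y z * (φ v x y * (φ v (x*y) z * (φ v x (y*z))⁻¹)) = φ (v*x) y z := by
    rw [h1, h2, h3, mul_inv_rev]
    apply Units.ext; push_cast; field_simp
  calc ((φ x y z : ℂ)) * ((φ v x y : ℂ) * ((φ v (x*y) z : ℂ) * (((φ v x (y*z))⁻¹ : ℂˣ) * ψ v)))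
      = ((φ x y z * (φ v x y * (φ v (x*y) z * (φ v x (y*z))⁻¹)) : ℂˣ) : ℂ) * ψ v := by
        push_cast; ring
    _ = (φ (v*x) y z : ℂ) * ψ v := by rw [key]
end

section
/- The twisted kernel product (K₁*K₂)(x,z) = ∫ φ(x,y,z) K₁(x,y) K₂(y,z) dy is associative if and only if φ(x,y,z)·φ(x,z,w) = φ(x,y,w)·φ(y,z,w) for all x,y,z,w ∈ G. -/
/-!
Evaluated at `(x, w)`, both triple products are sums over `(y, z)` of
`K₁ x y * K₂ y z * K₃ z w`, weighted by `φ x y z * φ x z w` on the left and by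
`φ x y w * φ y z w` on the right; the summand is supported in the support of `K₂`, so
the two iterated sums may be interchanged, and the cocycle identity gives associativity.
Conversely, on the elementary kernels `δ x y`, `δ y z`, `δ z w` both sides collapse to a
single term at `(x, w)`, which is exactly one side of the cocycle identity.
-/

open Function

theorem finsum_comm_of_hasFiniteSupport_uncurry {α β M : Type*} [AddCommMonoid M]
    (f : α → β → M) (hf : HasFiniteSupport (uncurry f)) :
    ∑ᶠ a, ∑ᶠ b, f a b = ∑ᶠ b, ∑ᶠ a, f a b :=
  calc ∑ᶠ a, ∑ᶠ b, f a b = ∑ᶠ p, uncurry f p := (finsum_curry _ hf).symm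
    _ = ∑ᶠ p : β × α, uncurry f p.swap := (finsum_comp_equiv (Equiv.prodComm β α)).symm
    _ = ∑ᶠ b, ∑ᶠ a, f a b := finsum_curry _ (hf.comp_of_injective Prod.swap_injective)

namespace Function

theorem HasFiniteSupport.fun_left_of_uncurry {α β M : Type*} [Zero M] {f : α → β → M}
    (hf : HasFiniteSupport (uncurry f)) (b : β) : HasFiniteSupport fun a => f a b :=
  (hf.image Prod.fst).subset fun a ha => ⟨(a, b), ha, rfl⟩

theorem HasFiniteSupport.apply_of_uncurry {α β M : Type*} [Zero M] {f : α → β → M}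
    (hf : HasFiniteSupport (uncurry f)) (a : α) : HasFiniteSupport (f a) :=
  (hf.image Prod.snd).subset fun b hb => ⟨(a, b), hb, rfl⟩

end Function

namespace TwistedKernel

variable {α R : Type*} [CommSemiring R]

noncomputable def twistedMul (φ : α → α → α → R) (K₁ K₂ : α → α → R) : α → α → R :=
  fun x z => ∑ᶠ y, φ x y z * K₁ x y * K₂ y z

def IsCocycle (φ : α → α → α → R) : Prop :=
  ∀ x y z w, φ x y z * φ x z w = φ x y w * φ y z w

theorem twistedMul_assoc {φ : α → α → α → R} (hφ : IsCocycle φ) (K₁ : α → α → R)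
    {K₂ : α → α → R} (hK₂ : HasFiniteSupport (uncurry K₂)) (K₃ : α → α → R) :
    twistedMul φ (twistedMul φ K₁ K₂) K₃ = twistedMul φ K₁ (twistedMul φ K₂ K₃) := by
  funext x w
  let F : α → α → R := fun y z => φ x y w * φ y z w * K₁ x y * K₂ y z * K₃ z w
  have hF : HasFiniteSupport (uncurry F) :=
    hK₂.subset fun p hp h₂ => hp <| by
      simp only [uncurry] at h₂ ⊢
      simp [F, h₂]
  calc twistedMul φ (twistedMul φ K₁ K₂) K₃ x w
      = ∑ᶠ z, ∑ᶠ y, F y z := by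
        refine finsum_congr fun z => ?_
        have := hK₂.fun_left_of_uncurry z
        rw [twistedMul, mul_finsum' _ _ (by fun_prop), finsum_mul' _ _ (by fun_prop)]
        refine finsum_congr fun y => ?_
        simp only [F, ← hφ x y z w]
        ring
    _ = ∑ᶠ y, ∑ᶠ z, F y z := (finsum_comm_of_hasFiniteSupport_uncurry F hF).symm
    _ = twistedMul φ K₁ (twistedMul φ K₂ K₃) x w := by
        refine finsum_congr fun y => ?_
        have := hK₂.apply_of_uncurry y
        rw [twistedMul, mul_finsum' _ _ (by fun_prop)]
        exact finsum_congr fun z => by ring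

section Delta

variable [DecidableEq α]

def delta (a b : α) : α → α → R := fun x y => if x = a ∧ y = b then 1 else 0

theorem hasFiniteSupport_delta (a b : α) : HasFiniteSupport (uncurry (delta a b : α → α → R)) :=
  (Set.finite_singleton (a, b)).subset fun p hp => by
    by_contra h
    exact hp (if_neg fun hab => h (Prod.ext hab.1 hab.2))

theorem twistedMul_delta_left (φ : α → α → α → R) (a b z : α) (K : α → α → R) :
    twistedMul φ (delta a b) K a z = φ a b z * K b z := by
  rw [twistedMul, finsum_eq_single _ b fun y hy => by simp [delta, hy]]
  simp [delta]

theorem twistedMul_delta_right (φ : α → α → α → R) (x b c : α) (K : α → α → R) :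
    twistedMul φ K (delta b c) x c = φ x b c * K x b := by
  rw [twistedMul, finsum_eq_single _ b fun y hy => by simp [delta, hy]]
  simp [delta]

theorem IsCocycle.of_twistedMul_delta_assoc {φ : α → α → α → R}
    (h : ∀ x y z w, twistedMul φ (twistedMul φ (delta x y) (delta y z)) (delta z w) =
      twistedMul φ (delta x y) (twistedMul φ (delta y z) (delta z w))) :
    IsCocycle φ := fun x y z w => by
  have := congrFun (congrFun (h x y z w) x) w
  simp only [twistedMul_delta_left, twistedMul_delta_right] at this
  simpa [delta, mul_comm] using this

end Delta

theorem twistedMul_assoc_iff {φ : α → α → α → R} :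
    (∀ K₁ K₂ K₃ : α → α → R, HasFiniteSupport (uncurry K₁) → HasFiniteSupport (uncurry K₂) →
        HasFiniteSupport (uncurry K₃) →
        twistedMul φ (twistedMul φ K₁ K₂) K₃ = twistedMul φ K₁ (twistedMul φ K₂ K₃)) ↔
      IsCocycle φ := by
  classical
  exact ⟨fun h => IsCocycle.of_twistedMul_delta_assoc fun x y z w =>
      h _ _ _ (hasFiniteSupport_delta x y) (hasFiniteSupport_delta y z)
        (hasFiniteSupport_delta z w),
    fun hφ K₁ K₂ K₃ _ hK₂ _ => twistedMul_assoc hφ K₁ hK₂ K₃⟩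

end TwistedKernel

open TwistedKernel in
theorem stmt_8_general (G : Type*) (φ : G → G → G → ℂˣ)
    -- the twisted kernel product
    (mul : (G → G → ℂ) → (G → G → ℂ) → (G → G → ℂ))
    (hmul : ∀ K₁ K₂ x z, mul K₁ K₂ x z = ∑ᶠ y, ((φ x y z : ℂˣ) : ℂ) * K₁ x y * K₂ y z) :
    (∀ K₁ K₂ K₃ : G → G → ℂ,
        (Function.support fun p : G × G => K₁ p.1 p.2).Finite →
        (Function.support fun p : G × G => K₂ p.1 p.2).Finite →
        (Function.support fun p : G × G => K₃ p.1 p.2).Finite →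
        mul (mul K₁ K₂) K₃ = mul K₁ (mul K₂ K₃)) ↔
      ∀ x y z w, φ x y z * φ x z w = φ x y w * φ y z w := by
  obtain rfl : mul = twistedMul fun x y z => (φ x y z : ℂ) := by
    funext K₁ K₂ x z
    exact hmul K₁ K₂ x z
  refine twistedMul_assoc_iff.trans (forall₄_congr fun x y z w => ?_)
  rw [← Units.val_mul, ← Units.val_mul, Units.val_inj]

/-- The twisted kernel product `(K₁*K₂)(x,z) = Σ_y φ(x,y,z) K₁(x,y) K₂(y,z)` is
associative if and only if `φ(x,y,z)·φ(x,z,w) = φ(x,y,w)·φ(y,z,w)` for all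
`x,y,z,w ∈ G`. -/
theorem stmt_8 (G : Type*) [Group G] (φ : G → G → G → ℂˣ)
    -- φ is an antisymmetric tricharacter with values in the circle
    (hnorm : ∀ x y z, ‖((φ x y z : ℂˣ) : ℂ)‖ = 1)
    (h1 : ∀ x x' y z, φ (x * x') y z = φ x y z * φ x' y z)
    (h2 : ∀ x y y' z, φ x (y * y') z = φ x y z * φ x y' z)
    (h3 : ∀ x y z z', φ x y (z * z') = φ x y z * φ x y z')
    (ha1 : ∀ x y z, φ y x z = (φ x y z)⁻¹)
    (ha2 : ∀ x y z, φ x z y = (φ x y z)⁻¹)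
    -- the twisted kernel product
    (mul : (G → G → ℂ) → (G → G → ℂ) → (G → G → ℂ))
    (hmul : ∀ K₁ K₂ x z, mul K₁ K₂ x z = ∑ᶠ y, ((φ x y z : ℂˣ) : ℂ) * K₁ x y * K₂ y z) :
    (∀ K₁ K₂ K₃ : G → G → ℂ,
        (Function.support fun p : G × G => K₁ p.1 p.2).Finite →
        (Function.support fun p : G × G => K₂ p.1 p.2).Finite →
        (Function.support fun p : G × G => K₃ p.1 p.2).Finite →
        mul (mul K₁ K₂) K₃ = mul K₁ (mul K₂ K₃)) ↔
      ∀ x y z w, φ x y z * φ x z w = φ x y w * φ y z w :=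
  stmt_8_general G φ mul hmul
end

section
/- For y ∈ G, the map β_y[f](x) = ad(u(x,y))[f(xy)] preserves the twisted induced equivariance condition: if f(rx) = ad(u(r,x))⁻¹ α_r[f(x)] for all r ∈ N then β_y[f](rx) = ad(u(r,x))⁻¹ α_r[β_y[f](x)], and β_y is a *-homomorphism for the pointwise product. -/
/-- For `y ∈ G`, the map `β_y[f](x) = ad(u(x,y))[f(xy)]` preserves the twisted
induced equivariance condition, and is a *-homomorphism for the pointwise
product. -/
theorem stmt_14 (G : Type*) [CommGroup G] (N : Subgroup G)
    (A : Type*) [Ring A] [StarRing A] [Algebra ℂ A]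
    (α : N → (A ≃ₐ[ℂ] A)) (hαstar : ∀ (r : N) (a : A), α r (star a) = star (α r a))
    (u : G → G → Aˣ) (hustar : ∀ x y, star ((u x y : A)) = ((((u x y)⁻¹ : Aˣ)) : A))
    (φ : G → G → G → ℂˣ)
    -- α_r α_s = ad(u(r,s)) α_{rs} on N
    (hαu : ∀ (r s : N) (a : A),
      α r (α s a) = (u (r : G) (s : G) : A) * α (r * s) a * ((((u (r : G) (s : G))⁻¹ : Aˣ)) : A))
    -- the extended modified cocycle relation: α_r[u(x,y)] u(r,xy) = φ(r,x,y) u(r,x) u(rx,y)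
    (hext : ∀ (r : N) (x y : G),
      α r ((u x y : A)) * (u (r : G) (x * y) : A) =
        ((φ (r : G) x y : ℂˣ) : ℂ) • ((u (r : G) x : A) * (u ((r : G) * x) y : A)))
    -- the maps β
    (β : G → (G → A) → (G → A))
    (hβ : ∀ y f x, β y f x = (u x y : A) * f (x * y) * ((((u x y)⁻¹ : Aˣ)) : A))
    (f g : G → A)
    (hf : ∀ (r : N) (x : G),
      f ((r : G) * x) = ((((u (r : G) x)⁻¹ : Aˣ)) : A) * α r (f x) * (u (r : G) x : A)) :
    (∀ (y : G) (r : N) (x : G),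
        β y f ((r : G) * x) =
          ((((u (r : G) x)⁻¹ : Aˣ)) : A) * α r (β y f x) * (u (r : G) x : A)) ∧
      (∀ y x, β y (fun t => f t * g t) x = β y f x * β y g x) ∧
      (∀ y x, β y (fun t => star (f t)) x = star (β y f x)) := by
  refine ⟨?_, ?_, ?_⟩
  · intro y r x
    set c : ℂ := ((φ (r : G) x y : ℂˣ) : ℂ) with hc
    have hc0 : c⁻¹ * c = 1 := inv_mul_cancel₀ (Units.ne_zero _)
    -- h1 : α r (u x y) = c • (u r x * u (rx) y * (u r (xy))⁻¹)
    have h1 : α r ((u x y : A)) =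
        c • ((u (r : G) x : A) * (u ((r : G) * x) y : A) * ((((u (r : G) (x * y))⁻¹ : Aˣ)) : A)) := by
      have := congrArg (· * ((((u (r : G) (x * y))⁻¹ : Aˣ)) : A)) (hext r x y)
      simpa [mul_assoc, smul_mul_assoc] using this
    -- h2 : α r (u x y)⁻¹ = c⁻¹ • (u r (xy) * (u (rx) y)⁻¹ * (u r x)⁻¹)
    have h2 : α r ((((u x y)⁻¹ : Aˣ)) : A) =
        c⁻¹ • ((u (r : G) (x * y) : A) * ((((u ((r : G) * x) y)⁻¹ : Aˣ)) : A)
          * ((((u (r : G) x)⁻¹ : Aˣ)) : A)) := by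
      have key : α r ((u x y : A)) * (c⁻¹ • ((u (r : G) (x * y) : A)
          * ((((u ((r : G) * x) y)⁻¹ : Aˣ)) : A) * ((((u (r : G) x)⁻¹ : Aˣ)) : A))) = 1 := by
        rw [h1, smul_mul_assoc, mul_smul_comm, smul_smul]
        rw [mul_comm c c⁻¹, hc0, one_smul]
        simp [mul_assoc]
      calc α r ((((u x y)⁻¹ : Aˣ)) : A)
          = α r ((((u x y)⁻¹ : Aˣ)) : A) * (α r ((u x y : A)) * (c⁻¹ • ((u (r : G) (x * y) : A)
            * ((((u ((r : G) * x) y)⁻¹ : Aˣ)) : A) * ((((u (r : G) x)⁻¹ : Aˣ)) : A)))) := by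
              rw [key, mul_one]
        _ = (α r ((((u x y)⁻¹ : Aˣ) : A) * (u x y : A))) * (c⁻¹ • ((u (r : G) (x * y) : A)
            * ((((u ((r : G) * x) y)⁻¹ : Aˣ)) : A) * ((((u (r : G) x)⁻¹ : Aˣ)) : A))) := by
              simp only [map_mul, mul_assoc]
        _ = _ := by simp
    have hxy : (r : G) * x * y = (r : G) * (x * y) := mul_assoc _ _ _
    rw [hβ, hβ, hxy, hf r (x * y), map_mul, map_mul, h1, h2]
    simp [smul_mul_assoc, mul_smul_comm, smul_smul, hc0, mul_assoc]
  · intro y x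
    simp [hβ, mul_assoc, Units.inv_mul_cancel_left]
  · intro y x
    have hst : star ((((u x y)⁻¹ : Aˣ)) : A) = (u x y : A) := by
      rw [← hustar, star_star]
    rw [hβ, hβ, star_mul, star_mul, hst, hustar, mul_assoc]
end

section
/- The multiplier functions v(y,z)(x) = φ(x,y,z) u(x,y) u(xy,z) u(x,yz)⁻¹ satisfy the modified cocycle identity β_x[v(y,z)]·v(x,yz) = φ(x,y,z)·v(x,y)·v(xy,z), where β_x[v(y,z)](s) = ad(u(s,x))[v(y,z)(sx)]. -/
/-- The multiplier functions `v(y,z)(x) = φ(x,y,z) u(x,y) u(xy,z) u(x,yz)⁻¹`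
satisfy the modified cocycle identity
`β_x[v(y,z)]·v(x,yz) = φ(x,y,z)·v(x,y)·v(xy,z)`, where
`β_x[v(y,z)](s) = ad(u(s,x))[v(y,z)(sx)]`. -/
theorem stmt_16 (G : Type*) [CommGroup G]
    (A : Type*) [Ring A] [Algebra ℂ A]
    (u : G → G → Aˣ) (φ : G → G → G → ℂˣ)
    -- φ is an antisymmetric tricharacter with values in the circle
    (hnorm : ∀ x y z, ‖((φ x y z : ℂˣ) : ℂ)‖ = 1)
    (h1 : ∀ x x' y z, φ (x * x') y z = φ x y z * φ x' y z)
    (h2 : ∀ x y y' z, φ x (y * y') z = φ x y z * φ x y' z)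
    (h3 : ∀ x y z z', φ x y (z * z') = φ x y z * φ x y z')
    (ha1 : ∀ x y z, φ y x z = (φ x y z)⁻¹)
    (ha2 : ∀ x y z, φ x z y = (φ x y z)⁻¹)
    -- the multiplier functions v
    (v : G → G → G → A)
    (hv : ∀ y z x, v y z x =
      ((φ x y z : ℂˣ) : ℂ) •
        ((u x y : A) * (u (x * y) z : A) * ((((u x (y * z))⁻¹ : Aˣ)) : A))) :
    ∀ (x y z s : G),
      (u s x : A) * v y z (s * x) * ((((u s x)⁻¹ : Aˣ)) : A) * v x (y * z) s =
        ((φ x y z : ℂˣ) : ℂ) • (v x y s * v (x * y) z s) := by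
  intro x y z s
  have e1 : ((φ (s*x) y z : ℂˣ) : ℂ) = ((φ s y z : ℂˣ):ℂ) * ((φ x y z : ℂˣ):ℂ) := by
    exact_mod_cast congrArg Units.val (h1 s x y z)
  have e2 : ((φ s x (y*z) : ℂˣ) : ℂ) = ((φ s x y : ℂˣ):ℂ) * ((φ s x z : ℂˣ):ℂ) := by
    exact_mod_cast congrArg Units.val (h3 s x y z)
  have e3 : ((φ s (x*y) z : ℂˣ) : ℂ) = ((φ s x z : ℂˣ):ℂ) * ((φ s y z : ℂˣ):ℂ) := by
    exact_mod_cast congrArg Units.val (h2 s x y z)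
  have hU : (u s x * (u (s*x) y * u ((s*x)*y) z * (u (s*x) (y*z))⁻¹) * (u s x)⁻¹ *
      (u s x * u (s*x) (y*z) * (u s (x*(y*z)))⁻¹) : Aˣ)
      = (u s x * u (s*x) y * (u s (x*y))⁻¹) * (u s (x*y) * u (s*(x*y)) z * (u s ((x*y)*z))⁻¹) := by
    rw [mul_assoc s x y, mul_assoc x y z]
    group
  have hUA := congrArg Units.val hU
  push_cast at hUA
  simp only [hv]
  simp only [smul_mul_assoc, mul_smul_comm, smul_smul]
  rw [e1, e2, e3]
  rw [show ((u s x : A) * (↑(u (s*x) y) * ↑(u ((s*x)*y) z) * ↑((u (s*x) (y*z))⁻¹)) * ↑((u s x)⁻¹) *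
      (↑(u s x) * ↑(u (s*x) (y*z)) * ↑((u s (x*(y*z)))⁻¹))) =
      ((u s x : A) * ↑(u (s*x) y) * ↑((u s (x*y))⁻¹) * (↑(u s (x*y)) * ↑(u (s*(x*y)) z) * ↑((u s ((x*y)*z))⁻¹)))
    from hUA]
  ring_nf
end
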